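/- arXiv:2406.03281 — 2 statements merged into one kernel-verified Lean document; each statement's English description precedes it below -/
import Mathlib

section
/- Let T ⊂ 𝕋^d and I ⊂ ℕ₀^d be finite, with columns a_h, h ∈ M(I), of the Fourier matrix F(T, M(I)). Suppose that for each k ∈ I there exists some h ∈ M({k}) such that a_h ∉ span{a_l : l ∈ M(I) \ {h}}. Then the Chebyshev matrix C(Cos(T), I) has full column rank |I|. -/
open Real Complex

/-- The normalized `d`-variate Chebyshev polynomial. -/
noncomputable def chebT {d : ℕ} (k : Fin d → ℕ) (x : Fin d → ℝ) : ℝ :=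
  ∏ j, if k j = 0 then 1 else Real.sqrt 2 * Real.cos (k j * Real.arccos (x j))

/-- The mirror set `M({k})` of a single multi-index. -/
def mirror {d : ℕ} (k : Fin d → ℕ) : Finset (Fin d → ℤ) :=
  Finset.image (fun l : Fin d → Bool => fun j => if l j then (k j : ℤ) else -(k j : ℤ))
    Finset.univ

/-- The mirrored index set `M(I) = ⋃_{k ∈ I} M({k})`. -/
def mirrorSet {d : ℕ} (I : Finset (Fin d → ℕ)) : Finset (Fin d → ℤ) :=
  I.biUnion mirror

/-- The Chebyshev sampling matrix `C(X,I) = (T_k(x))_{x∈X,k∈I}`. -/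
noncomputable def chebMatrix {d : ℕ} (X : Finset (Fin d → ℝ)) (I : Finset (Fin d → ℕ)) :
    Matrix {x // x ∈ X} {k // k ∈ I} ℝ :=
  fun x k => chebT (k : Fin d → ℕ) (x : Fin d → ℝ)

/-- The Fourier sampling matrix `F(T,J) = (e^{2πi h·t})_{t∈T,h∈J}`. -/
noncomputable def fourierMatrix {d : ℕ} (T : Finset (Fin d → ℝ)) (J : Finset (Fin d → ℤ)) :
    Matrix {t // t ∈ T} {h // h ∈ J} ℂ :=
  fun t h => Complex.exp (2 * Real.pi * Complex.I * ∑ j, ((h : Fin d → ℤ) j : ℂ) * ((t : Fin d → ℝ) j : ℂ))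

/-
Evaluated at `cos (2πt)`, each Chebyshev column is a weighted sum of Fourier columns:
`T_k(cos 2πt) = α_k ∑_l e^{2πi σ_l(k)·t}`, the sum running over all sign patterns `l`, with
`σ_l(k) ∈ M({k})`. Mirror sets of distinct `k` are disjoint, since `|h|` recovers `k`. Given a
vanishing combination `∑ c_k C_k = 0` and the isolated column `a_h`, `h ∈ M({k})`, a linear
functional that is `1` at `a_h` and kills all other Fourier columns sends it to `c_k α_k N`,
where `N ≥ 1` counts the sign patterns producing `h`; so `c_k = 0`.
-/

open Finset

lemma Real.cos_nat_mul_arccos_cos (n : ℕ) (θ : ℝ) :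
    Real.cos (n * Real.arccos (Real.cos θ)) = Real.cos (n * θ) := by
  have h := Polynomial.Chebyshev.T_real_cos (Real.arccos (Real.cos θ)) n
  rw [Real.cos_arccos (Real.neg_one_le_cos θ) (Real.cos_le_one θ),
    Polynomial.Chebyshev.T_real_cos] at h
  exact_mod_cast h.symm

section Mirror

variable {d : ℕ}

def signFlip (k : Fin d → ℕ) (l : Fin d → Bool) : Fin d → ℤ :=
  fun j => if l j then (k j : ℤ) else -(k j : ℤ)

lemma mirror_eq_image_signFlip (k : Fin d → ℕ) : mirror k = univ.image (signFlip k) := rfl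

lemma signFlip_mem_mirror (k : Fin d → ℕ) (l : Fin d → Bool) : signFlip k l ∈ mirror k :=
  mem_image_of_mem _ (mem_univ l)

lemma natAbs_of_mem_mirror {k : Fin d → ℕ} {h : Fin d → ℤ} (hh : h ∈ mirror k) (j : Fin d) :
    (h j).natAbs = k j := by
  rw [mirror_eq_image_signFlip] at hh
  obtain ⟨l, -, rfl⟩ := mem_image.mp hh
  by_cases hl : l j <;> simp [signFlip, hl]

lemma eq_of_mem_mirror {k k' : Fin d → ℕ} {h : Fin d → ℤ} (hk : h ∈ mirror k)
    (hk' : h ∈ mirror k') : k = k' :=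
  funext fun j => by rw [← natAbs_of_mem_mirror hk, natAbs_of_mem_mirror hk']

end Mirror

-- `1 = ½ (e⁰ + e⁰)` and `√2 cos(nθ) = (√2/2) (e^{inθ} + e^{-inθ})`: the Chebyshev factor of
-- degree `n` is `chebCoeff n` times the sum over both signs of `±n`.
noncomputable def chebCoeff (n : ℕ) : ℂ := if n = 0 then 1 / 2 else (Real.sqrt 2 / 2 : ℂ)

lemma chebCoeff_ne_zero (n : ℕ) : chebCoeff n ≠ 0 := by
  unfold chebCoeff
  split_ifs
  · norm_num
  · simp

lemma chebFactor_cos_eq_sum_exp (n : ℕ) (θ : ℝ) :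
    (((if n = 0 then 1 else Real.sqrt 2 * Real.cos (n * Real.arccos (Real.cos (2 * π * θ))))
        : ℝ) : ℂ) =
      ∑ b : Bool, chebCoeff n *
        Complex.exp (2 * π * Complex.I * (((if b then (n : ℤ) else -(n : ℤ)) : ℤ) : ℂ) * θ) := by
  simp only [Fintype.sum_bool, if_true, Bool.false_eq_true, if_false]
  by_cases hn : n = 0
  · simp [chebCoeff, hn]
    norm_num
  · rw [if_neg hn, Real.cos_nat_mul_arccos_cos]
    simp only [chebCoeff, hn, if_false, ← mul_add]
    push_cast
    rw [Complex.cos, show ((n : ℂ) * (2 * π * θ)) * Complex.I = 2 * π * Complex.I * n * θ by ring,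
      show -((n : ℂ) * (2 * π * θ)) * Complex.I = 2 * π * Complex.I * (-n) * θ by ring]
    ring

noncomputable def chebWeight {d : ℕ} (k : Fin d → ℕ) : ℂ := ∏ j, chebCoeff (k j)

lemma chebWeight_ne_zero {d : ℕ} (k : Fin d → ℕ) : chebWeight k ≠ 0 :=
  prod_ne_zero_iff.mpr fun j _ => chebCoeff_ne_zero (k j)

lemma chebT_cos_eq_sum_exp {d : ℕ} (k : Fin d → ℕ) (t : Fin d → ℝ) :
    (chebT k (fun j => Real.cos (2 * π * t j)) : ℂ) =
      chebWeight k * ∑ l : Fin d → Bool,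
        Complex.exp (2 * π * Complex.I * ∑ j, (signFlip k l j : ℂ) * (t j : ℂ)) := by
  calc (chebT k (fun j => Real.cos (2 * π * t j)) : ℂ)
      = ∏ j, ∑ b : Bool, chebCoeff (k j) * Complex.exp
          (2 * π * Complex.I * (((if b then (k j : ℤ) else -(k j : ℤ)) : ℤ) : ℂ) * t j) := by
        rw [chebT, Complex.ofReal_prod]
        exact prod_congr rfl fun j _ => chebFactor_cos_eq_sum_exp (k j) (t j)
    _ = ∑ l : Fin d → Bool, ∏ j, chebCoeff (k j) *
          Complex.exp (2 * π * Complex.I * (signFlip k l j : ℂ) * t j) := by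
        rw [prod_univ_sum, Fintype.piFinset_univ]
        rfl
    _ = _ := by
        simp only [prod_mul_distrib, ← Complex.exp_sum, mul_sum, chebWeight, mul_assoc]

noncomputable def fourierCol {d : ℕ} (T : Finset (Fin d → ℝ)) (h : Fin d → ℤ) :
    {t // t ∈ T} → ℂ :=
  fun t => Complex.exp (2 * π * Complex.I * ∑ j, (h j : ℂ) * ((t : Fin d → ℝ) j : ℂ))

lemma chebT_cos_eq_smul_sum_fourierCol {d : ℕ} (T : Finset (Fin d → ℝ)) (k : Fin d → ℕ) :
    (fun t : {t // t ∈ T} => (chebT k (fun j => Real.cos (2 * π * (t : Fin d → ℝ) j)) : ℂ)) =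
      chebWeight k • ∑ l : Fin d → Bool, fourierCol T (signFlip k l) := by
  ext t
  simp only [chebT_cos_eq_sum_exp, Pi.smul_apply, Finset.sum_apply, smul_eq_mul, fourierCol]

lemma Module.exists_dual_eq_one_of_notMem_span_image_ne {ι K V : Type*} [Field K]
    [AddCommGroup V] [Module K V] {a : ι → V} {i₀ : ι}
    (h : a i₀ ∉ Submodule.span K (a '' {i | i ≠ i₀})) :
    ∃ f : Module.Dual K V, f (a i₀) = 1 ∧ ∀ i, i ≠ i₀ → f (a i) = 0 := by
  obtain ⟨f, hf, hmap⟩ := Submodule.exists_dual_map_eq_bot_of_notMem h inferInstance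
  refine ⟨(f (a i₀))⁻¹ • f, by simp [hf], fun i hi => ?_⟩
  have hmem : f (a i) ∈ (Submodule.span K (a '' {i | i ≠ i₀})).map f :=
    Submodule.mem_map_of_mem (Submodule.subset_span ⟨i, hi, rfl⟩)
  rw [hmap, Submodule.mem_bot] at hmem
  simp [hmem]

lemma coeff_eq_zero_of_sum_chebT_cos_eq_zero {d : ℕ} {T : Finset (Fin d → ℝ)}
    {I : Finset (Fin d → ℕ)} (c : {k // k ∈ I} → ℝ)
    (hc : ∀ t ∈ T, ∑ k, c k * chebT (k : Fin d → ℕ) (fun j => Real.cos (2 * π * t j)) = 0)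
    {k₀ : {k // k ∈ I}} {h₀ : Fin d → ℤ} (hh₀ : h₀ ∈ mirror (k₀ : Fin d → ℕ))
    (f : Module.Dual ℂ ({t // t ∈ T} → ℂ)) (hf₀ : f (fourierCol T h₀) = 1)
    (hf : ∀ h ∈ mirrorSet I, h ≠ h₀ → f (fourierCol T h) = 0) :
    c k₀ = 0 := by
  set N : {k // k ∈ I} → ℂ := fun k => #{l | signFlip (k : Fin d → ℕ) l = h₀} with hN
  have hfcol : ∀ k : {k // k ∈ I},
      f (∑ l : Fin d → Bool, fourierCol T (signFlip k l)) = N k := by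
    intro k
    simp only [map_sum, hN, Finset.natCast_card_filter]
    refine sum_congr rfl fun l _ => ?_
    split_ifs with hl
    · rw [hl, hf₀]
    · exact hf _ (mem_biUnion.mpr ⟨k, k.2, signFlip_mem_mirror _ _⟩) hl
  have hN_ne : ∀ k, k ≠ k₀ → N k = 0 := by
    intro k hk
    simp only [hN, Nat.cast_eq_zero, card_eq_zero, filter_eq_empty_iff]
    rintro l - rfl
    exact hk (Subtype.ext (eq_of_mem_mirror (signFlip_mem_mirror _ _) hh₀))
  have hN₀ : N k₀ ≠ 0 := by
    rw [mirror_eq_image_signFlip] at hh₀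
    obtain ⟨l, -, hl⟩ := mem_image.mp hh₀
    simpa [hN, filter_nonempty_iff] using ⟨l, hl⟩
  have hrel : ∑ k, (c k : ℂ) • chebWeight (k : Fin d → ℕ) •
      ∑ l : Fin d → Bool, fourierCol T (signFlip k l) = 0 := by
    simp_rw [← chebT_cos_eq_smul_sum_fourierCol]
    ext t
    simpa [Finset.sum_apply] using congrArg ((↑) : ℝ → ℂ) (hc t t.2)
  apply_fun f at hrel
  simp only [map_sum, map_smul, hfcol, smul_eq_mul, map_zero] at hrel
  rw [sum_eq_single k₀ (fun k _ hk => by rw [hN_ne k hk, mul_zero, mul_zero])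
    (fun h => (h (mem_univ _)).elim)] at hrel
  exact_mod_cast (mul_eq_zero.mp hrel).resolve_right
    (mul_ne_zero (chebWeight_ne_zero _) hN₀)

theorem linearIndependent_chebMatrix_col {d : ℕ} {T X : Finset (Fin d → ℝ)}
    {I : Finset (Fin d → ℕ)} (hX : ∀ t ∈ T, (fun j => Real.cos (2 * π * t j)) ∈ X)
    (hI : ∀ k ∈ I, ∃ h : Fin d → ℤ, ∃ hmem : h ∈ mirrorSet I, h ∈ mirror k ∧
      (fun t : {t // t ∈ T} => fourierMatrix T (mirrorSet I) t ⟨h, hmem⟩) ∉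
        Submodule.span ℂ
          ((fun l : {l // l ∈ mirrorSet I} =>
              (fun t : {t // t ∈ T} => fourierMatrix T (mirrorSet I) t l))
            '' {l | l ≠ ⟨h, hmem⟩})) :
    LinearIndependent ℝ (chebMatrix X I).col := by
  rw [Fintype.linearIndependent_iff]
  intro c hc k₀
  obtain ⟨h₀, hmem, hh₀, hspan⟩ := hI k₀ k₀.2
  obtain ⟨f, hf₀, hf⟩ := Module.exists_dual_eq_one_of_notMem_span_image_ne hspan
  refine coeff_eq_zero_of_sum_chebT_cos_eq_zero c (fun t ht => ?_) hh₀ f hf₀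
    (fun h hh hne => hf ⟨h, hh⟩ (fun heq => hne (congrArg Subtype.val heq)))
  simpa [chebMatrix, Finset.sum_apply] using congrFun hc ⟨_, hX t ht⟩

/-- Corollary `matrix_C_full_crank`: if for each `k ∈ I` there is some
`h ∈ M({k})` whose column of `F(T,M(I))` is not in the span of all other columns, then
the Chebyshev matrix `C(Cos(T),I)` has full column rank `|I|`. -/
theorem stmt_11 {d : ℕ} (T : Finset (Fin d → ℝ)) (X : Finset (Fin d → ℝ))
    (I : Finset (Fin d → ℕ))
    (hX : X = @Finset.image _ _ (Classical.decEq _)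
      (fun t : Fin d → ℝ => fun j => Real.cos (2 * Real.pi * t j)) T)
    (hNISOR : ∀ k ∈ I, ∃ h : Fin d → ℤ, ∃ hmem : h ∈ mirrorSet I, h ∈ mirror k ∧
      (fun t : {t // t ∈ T} => fourierMatrix T (mirrorSet I) t ⟨h, hmem⟩) ∉
        Submodule.span ℂ
          ((fun l : {l // l ∈ mirrorSet I} =>
              (fun t : {t // t ∈ T} => fourierMatrix T (mirrorSet I) t l))
            '' {l | l ≠ ⟨h, hmem⟩})) :
    (chebMatrix X I).rank = I.card := by
  have hcos : ∀ t ∈ T, (fun j => Real.cos (2 * π * t j)) ∈ X := by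
    subst hX
    exact fun t ht => @mem_image_of_mem _ _ (Classical.decEq _) _ _ _ ht
  rw [Matrix.rank_eq_finrank_span_cols,
    finrank_span_eq_card (linearIndependent_chebMatrix_col hcos hNISOR), Fintype.card_coe]
end

section
/- Fix c > 1, δ ∈ (0,1], a finite index set I ⊂ ℕ₀^d, an element k ∈ I, an integer L ≥ ⌈(c/(c-1))² (ln|I| - ln δ)/2⌉, and a prime M ≥ c(|M(I)|-1) such that reduction mod M is injective on M(I). Draw L generating vectors z₁,...,z_L i.i.d. uniformly from {0,...,M-1}^d. Then the probability that for every ℓ ∈ {1,...,L} the frequency k aliases (i.e., ∃ h ∈ M(I)\{k} with k·z_ℓ ≡ h·z_ℓ mod M) is at most e^{-2L((c-1)/c)²} ≤ δ/|I|. -/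
/-!
For a single draw `z`, the frequency `k` aliases with `h ≠ k` exactly when `z` lies on the
hyperplane `(h - k) · z ≡ 0 (mod M)`. Injectivity of reduction mod `M` on `M(I)` makes `h - k`
nonzero mod the prime `M`, so each hyperplane holds `M^(d-1)` of the `M^d` points and the aliasing
draws form a fraction at most `(|M(I)| - 1) / M ≤ 1/c`. Independence of the `L` draws gives
`(1/c)^L`, and `-log p ≥ 2 (1 - p)²` (Hoeffding's bound for an all-success event) turns this
into `e^{-2L((c-1)/c)²}`, which the choice of `L` makes at most `δ/|I|`.
-/

open Finset Real

lemma two_mul_one_sub_sq_le_neg_log {p : ℝ} (hp0 : 0 < p) (hp1 : p ≤ 1) :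
    2 * (1 - p) ^ 2 ≤ -log p := by
  set x := 1 - p
  have hx0 : 0 ≤ x := by linarith
  have hx1 : x ≤ 1 := by linarith
  have hseries := hasSum_pow_div_log_of_abs_lt_one (x := x)
    (by rw [abs_lt]; constructor <;> linarith)
  -- the Taylor polynomial of degree 4 of `-log (1 - x)` already dominates `2 x²` on `[0, 1]`
  have htaylor := sum_le_hasSum (range 4) (fun n _ => by positivity) hseries
  simp only [sum_range_succ, sum_range_zero, x, sub_sub_cancel] at htaylor
  nlinarith [mul_nonneg hx0 (sub_nonneg.2 hx1), mul_nonneg (mul_nonneg hx0 hx0) (sub_nonneg.2 hx1),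
    mul_nonneg (mul_nonneg hx0 hx0) hx0]

lemma pow_le_exp_neg_two_mul_one_sub_sq {p : ℝ} (hp0 : 0 < p) (hp1 : p ≤ 1) (n : ℕ) :
    p ^ n ≤ exp (-2 * n * (1 - p) ^ 2) := by
  calc p ^ n = exp (n * log p) := by rw [exp_nat_mul, exp_log hp0]
    _ ≤ exp (-2 * n * (1 - p) ^ 2) := by
      refine exp_le_exp.mpr ?_
      nlinarith [two_mul_one_sub_sq_le_neg_log hp0 hp1, (Nat.cast_nonneg n : (0 : ℝ) ≤ n)]

lemma exp_neg_le_div_of_log_sub_le {n δ x : ℝ} (hn : 0 < n) (hδ : 0 < δ)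
    (h : log n - log δ ≤ x) : exp (-x) ≤ δ / n := by
  calc exp (-x) ≤ exp (log δ - log n) := exp_le_exp.mpr (by linarith)
    _ = δ / n := by rw [exp_sub, exp_log hδ, exp_log hn]

lemma Fin.eq_of_dvd_sub {M : ℕ} {a b : Fin M} (h : (M : ℤ) ∣ (a : ℤ) - b) : a = b := by
  have := (Int.modEq_iff_dvd.mpr h).eq
  rw [Int.emod_eq_of_lt (by positivity) (by exact_mod_cast b.isLt),
    Int.emod_eq_of_lt (by positivity) (by exact_mod_cast a.isLt)] at this
  exact Fin.ext (by exact_mod_cast this.symm)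

/-- Restricting away the coordinate `j` is injective on the solutions, since `z j` is then
determined modulo the prime `M`. -/
lemma mul_card_filter_dvd_sum_le {d M : ℕ} (hM : M.Prime) (a : Fin d → ℤ) (j : Fin d)
    (hj : ¬ (M : ℤ) ∣ a j) :
    M * #{z : Fin d → Fin M | (M : ℤ) ∣ ∑ i, a i * z i} ≤ M ^ d := by
  have hcard : Fintype.card ({i : Fin d // i ≠ j} → Fin M) * M = M ^ d := by
    rw [Fintype.card_fun, Fintype.card_subtype_compl, Fintype.card_subtype_eq, Fintype.card_fin,
      Fintype.card_fin, ← pow_succ, Nat.sub_add_cancel (Fin.pos j)]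
  rw [← hcard, mul_comm, ← card_univ]
  gcongr
  refine card_le_card_of_injOn (fun z (i : {i // i ≠ j}) => z i)
    (fun _ _ => mem_univ _) fun z hz z' hz' heq => ?_
  simp only [coe_filter, mem_univ, true_and, Set.mem_ofPred_eq] at hz hz'
  have hoff : ∀ i, i ≠ j → z i = z' i := fun i hi => congrFun heq ⟨i, hi⟩
  have hdiff : ∑ i, a i * (z i : ℤ) - ∑ i, a i * (z' i : ℤ) = a j * ((z j : ℤ) - z' j) := by
    rw [← sum_sub_distrib, sum_eq_single j (fun i _ hi => by rw [hoff i hi]; ring)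
      (by simp)]
    ring
  have hj' : z j = z' j := by
    have hdvd : (M : ℤ) ∣ a j * ((z j : ℤ) - z' j) := hdiff ▸ dvd_sub hz hz'
    exact Fin.eq_of_dvd_sub (((Nat.prime_iff_prime_int.mp hM).dvd_mul.mp hdvd).resolve_left hj)
  funext i
  by_cases hi : i = j
  · rw [hi, hj']
  · exact hoff i hi

def aliasingVectors {d : ℕ} (S : Finset (Fin d → ℤ)) (k : Fin d → ℤ) (M : ℕ) :
    Finset (Fin d → Fin M) :=
  {z | ∃ h ∈ S, h ≠ k ∧ (M : ℤ) ∣ ∑ i, (h i - k i) * z i}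

lemma exists_not_dvd_sub_of_injOn_emod {d : ℕ} {S : Finset (Fin d → ℤ)} {M : ℕ}
    (hinj : Set.InjOn (fun h : Fin d → ℤ => fun i => h i % (M : ℤ)) S)
    {h k : Fin d → ℤ} (hh : h ∈ S) (hk : k ∈ S) (hne : h ≠ k) :
    ∃ j, ¬ (M : ℤ) ∣ h j - k j := by
  by_contra! hdvd
  exact hne (hinj hh hk (funext fun i => (Int.ModEq.symm (Int.modEq_iff_dvd.mpr (hdvd i))).eq))

lemma mul_card_aliasingVectors_le {d M : ℕ} (hM : M.Prime) {S : Finset (Fin d → ℤ)}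
    {k : Fin d → ℤ} (hk : k ∈ S)
    (hinj : Set.InjOn (fun h : Fin d → ℤ => fun i => h i % (M : ℤ)) S) :
    M * #(aliasingVectors S k M) ≤ (#S - 1) * M ^ d := by
  have hcover : aliasingVectors S k M ⊆
      (S.erase k).biUnion fun h => {z | (M : ℤ) ∣ ∑ i, (h i - k i) * z i} := by
    intro z hz
    obtain ⟨h, hh, hne, hdvd⟩ := (mem_filter.mp hz).2
    exact mem_biUnion.mpr ⟨h, mem_erase.mpr ⟨hne, hh⟩, by simpa using hdvd⟩
  calc M * #(aliasingVectors S k M)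
      ≤ ∑ h ∈ S.erase k, M * #{z : Fin d → Fin M | (M : ℤ) ∣ ∑ i, (h i - k i) * z i} := by
        rw [← mul_sum]
        exact Nat.mul_le_mul_left M ((card_le_card hcover).trans card_biUnion_le)
    _ ≤ ∑ _h ∈ S.erase k, M ^ d := by
        refine sum_le_sum fun h hh => ?_
        obtain ⟨hne, hhS⟩ := mem_erase.mp hh
        obtain ⟨j, hj⟩ := exists_not_dvd_sub_of_injOn_emod hinj hhS hk hne
        exact mul_card_filter_dvd_sum_le hM (fun i => h i - k i) j hj
    _ = (#S - 1) * M ^ d := by rw [sum_const, card_erase_of_mem hk, smul_eq_mul]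

lemma mul_card_aliasingVectors_le_pow {d M : ℕ} (hM : M.Prime) {S : Finset (Fin d → ℤ)}
    {k : Fin d → ℤ} (hk : k ∈ S)
    (hinj : Set.InjOn (fun h : Fin d → ℤ => fun i => h i % (M : ℤ)) S)
    {c : ℝ} (hc : 0 ≤ c) (hMc : c * (#S - 1) ≤ M) :
    c * #(aliasingVectors S k M) ≤ (M : ℝ) ^ d := by
  have hcount : (M : ℝ) * #(aliasingVectors S k M) ≤ (#S - 1) * (M : ℝ) ^ d := by
    have := mul_card_aliasingVectors_le hM hk hinj
    rwa [← Nat.cast_le (α := ℝ), Nat.cast_mul, Nat.cast_mul, Nat.cast_sub (card_pos.mpr ⟨k, hk⟩),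
      Nat.cast_pow, Nat.cast_one] at this
  refine le_of_mul_le_mul_left ?_ (Nat.cast_pos.mpr hM.pos)
  calc (M : ℝ) * (c * #(aliasingVectors S k M))
      = c * ((M : ℝ) * #(aliasingVectors S k M)) := by ring
    _ ≤ c * ((#S - 1) * (M : ℝ) ^ d) := by gcongr
    _ = c * (#S - 1) * (M : ℝ) ^ d := by ring
    _ ≤ M * (M : ℝ) ^ d := by gcongr

lemma mem_mirrorSet_of_mem {d : ℕ} {I : Finset (Fin d → ℕ)} {k : Fin d → ℕ} (hk : k ∈ I) :
    (fun j => (k j : ℤ)) ∈ mirrorSet I :=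
  mem_biUnion.mpr ⟨k, hk, mem_image.mpr ⟨fun _ => true, mem_univ _, rfl⟩⟩

/-- Theorem `gen_mr1l_cheb`: with `c > 1`, `δ ∈ (0,1]`, `k ∈ I`,
`L ≥ (c/(c-1))²(ln|I| - ln δ)/2`, and a prime `M ≥ c(|M(I)|-1)` such that reduction
mod `M` is injective on `M(I)`, the probability (over `L` i.i.d. uniform draws
`z₁,…,z_L ∈ {0,…,M-1}^d`) that `k` aliases within `M(I)` on every lattice
`Λ(z_ℓ,M)` is at most `e^{-2L((c-1)/c)²} ≤ δ/|I|`. -/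
theorem stmt_16 {d : ℕ} (I : Finset (Fin d → ℕ)) (k : Fin d → ℕ) (hk : k ∈ I)
    (c δ : ℝ) (hc : 1 < c) (hδ : δ ∈ Set.Ioc (0 : ℝ) 1)
    (L : ℕ) (hL : (c / (c - 1)) ^ 2 * (Real.log I.card - Real.log δ) / 2 ≤ (L : ℝ))
    (M : ℕ) (hM : Nat.Prime M) (hMc : c * ((mirrorSet I).card - 1) ≤ (M : ℝ))
    (hinj : Set.InjOn (fun h : Fin d → ℤ => fun i => h i % (M : ℤ)) (mirrorSet I)) :
    ((Finset.univ.filter fun zs : Fin L → Fin d → Fin M =>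
        ∀ ℓ : Fin L, ∃ h ∈ mirrorSet I, h ≠ (fun j => (k j : ℤ)) ∧
          ((M : ℤ) ∣ ∑ i, (h i - (k i : ℤ)) * (zs ℓ i : ℤ))).card : ℝ) ≤
      Real.exp (-2 * (L : ℝ) * ((c - 1) / c) ^ 2) * ((M ^ d : ℕ) : ℝ) ^ (L : ℕ)
    ∧ Real.exp (-2 * (L : ℝ) * ((c - 1) / c) ^ 2) ≤ δ / I.card := by
  have hc0 : 0 < c := one_pos.trans hc
  have hk' := mem_mirrorSet_of_mem hk
  set A := aliasingVectors (mirrorSet I) (fun j => (k j : ℤ)) M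
  have hA : c * #A ≤ (M : ℝ) ^ d := mul_card_aliasingVectors_le_pow hM hk' hinj hc0.le hMc
  have hfilter : (univ.filter fun zs : Fin L → Fin d → Fin M =>
      ∀ ℓ : Fin L, ∃ h ∈ mirrorSet I, h ≠ (fun j => (k j : ℤ)) ∧
        ((M : ℤ) ∣ ∑ i, (h i - (k i : ℤ)) * (zs ℓ i : ℤ))) = Fintype.piFinset fun _ => A := by
    ext zs
    simp [A, aliasingVectors, Fintype.mem_piFinset]
  constructor
  · rw [hfilter, Fintype.card_piFinset, prod_const, card_univ, Fintype.card_fin]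
    calc ((#A ^ L : ℕ) : ℝ) ≤ ((M : ℝ) ^ d * c⁻¹) ^ L := by
          push_cast
          exact pow_le_pow_left₀ (by positivity) (by rwa [le_mul_inv_iff₀ hc0, mul_comm]) L
      _ = c⁻¹ ^ L * ((M ^ d : ℕ) : ℝ) ^ L := by push_cast; ring
      _ ≤ _ := by
          gcongr
          have hsub : 1 - c⁻¹ = (c - 1) / c := by field_simp
          simpa [hsub] using
            pow_le_exp_neg_two_mul_one_sub_sq (inv_pos.mpr hc0) (inv_le_one_of_one_le₀ hc.le) L
  · rw [neg_mul, neg_mul]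
    refine exp_neg_le_div_of_log_sub_le (Nat.cast_pos.mpr (card_pos.mpr ⟨k, hk⟩)) hδ.1 ?_
    have hc1 : c - 1 ≠ 0 := (sub_pos.mpr hc).ne'
    calc log #I - log δ
        = (c / (c - 1)) ^ 2 * (log #I - log δ) / 2 * (2 * ((c - 1) / c) ^ 2) := by
          field_simp
      _ ≤ L * (2 * ((c - 1) / c) ^ 2) := by gcongr
      _ = 2 * L * ((c - 1) / c) ^ 2 := by ring
end
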